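/- arXiv:1308.2454 — 2 statements merged into one kernel-verified Lean document; each statement's English description precedes it below -/
import Mathlib

section
/- For real numbers γ > 2, T > 0, ρ > 0, R > 0, the double integral V = ∫_0^∞ 2π r₁ ∫_0^R (Tρ r₂^γ / r₁^γ) / (Tρ r₂^γ / r₁^γ + 1) · 2π r₂ dr₂ dr₁ satisfies V ≤ 4π²R⁴(Tρ)^{2/γ} (1/8 + 1/(4(γ+2)) + 1/((γ+2)(γ−2))). -/
open Real MeasureTheory Set

/-!
Since `q / (q + 1) ≤ min 1 q`, the inner integral is bounded by that of `min 1 ((r₂ / s) ^ γ) * r₂`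
with `s = r₁ / (Tρ)^(1/γ)`, which is explicit: `s² / (γ + 2) + (R² - s²) / 2` when `s ≤ R` and
`R^(γ+2) / ((γ + 2) s^γ)` otherwise. After the substitution `r₁ = (Tρ)^(1/γ) s` the outer integral
splits at `s = R` into a polynomial integral and the tail `∫_R^∞ s^(1-γ) ds`, finite as `γ > 2`;
together they give `R⁴ (1/8 + 1/(4(γ+2)) + 1/((γ+2)(γ-2)))`.
-/

noncomputable def clippedPowerIntegral (γ R s : ℝ) : ℝ :=
  if s ≤ R then s ^ 2 / (γ + 2) + (R ^ 2 - s ^ 2) / 2 else R ^ (γ + 2) / ((γ + 2) * s ^ γ)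

lemma div_add_one_le_min_one_self {x : ℝ} (hx : 0 ≤ x) : x / (x + 1) ≤ min 1 x :=
  le_min ((div_le_one (by positivity)).2 (by linarith)) (div_le_self hx (by linarith))

lemma integral_rpow_div_mul_self {γ s t : ℝ} (hγ : -2 < γ) (hs : 0 < s) (ht : 0 ≤ t) :
    ∫ x in (0:ℝ)..t, (x / s) ^ γ * x = t ^ (γ + 2) / ((γ + 2) * s ^ γ) := by
  calc ∫ x in (0:ℝ)..t, (x / s) ^ γ * x = ∫ x in (0:ℝ)..t, (s ^ γ)⁻¹ * x ^ (γ + 1) := by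
        refine intervalIntegral.integral_congr_ae (.of_forall fun x hx => ?_)
        have hx0 : 0 < x := (uIoc_of_le ht ▸ hx).1
        rw [div_rpow hx0.le hs.le, rpow_add_one hx0.ne']
        ring
    _ = _ := by
        rw [intervalIntegral.integral_const_mul, integral_rpow (by left; linarith),
          show γ + 1 + 1 = γ + 2 by ring, zero_rpow (by linarith), sub_zero]
        field_simp

lemma integral_min_one_rpow_div_mul_self {γ s R : ℝ} (hγ : 0 ≤ γ) (hs : 0 < s) (hR : 0 ≤ R) :
    ∫ x in (0:ℝ)..R, min 1 ((x / s) ^ γ) * x = clippedPowerIntegral γ R s := by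
  have hcont : Continuous fun x : ℝ => min 1 ((x / s) ^ γ) * x := by
    fun_prop (disch := exact hγ)
  have hclip : ∀ x ∈ Icc 0 s, min 1 ((x / s) ^ γ) * x = (x / s) ^ γ * x := fun x hx => by
    rw [min_eq_right (rpow_le_one (div_nonneg hx.1 hs.le) ((div_le_one hs).2 hx.2) hγ)]
  unfold clippedPowerIntegral
  split_ifs with hsR
  · have hsat : ∫ x in s..R, min 1 ((x / s) ^ γ) * x = ∫ x in s..R, x := by
      refine intervalIntegral.integral_congr fun x hx => ?_
      rw [uIcc_of_le hsR] at hx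
      rw [min_eq_left (one_le_rpow ((one_le_div hs).2 hx.1) hγ), one_mul]
    rw [← intervalIntegral.integral_add_adjacent_intervals
      (hcont.intervalIntegrable 0 s) (hcont.intervalIntegrable s R),
      intervalIntegral.integral_congr (uIcc_of_le hs.le ▸ hclip), hsat,
      integral_rpow_div_mul_self (by linarith) hs hs.le, integral_id, rpow_add hs, rpow_two]
    field_simp
  · rw [intervalIntegral.integral_congr (g := fun x => (x / s) ^ γ * x)
        (by rw [uIcc_of_le hR]; exact fun x hx => hclip x ⟨hx.1, hx.2.trans (not_le.1 hsR).le⟩),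
      integral_rpow_div_mul_self (by linarith) hs hR]

lemma setIntegral_rpow_div_add_one_mul_le {γ s R : ℝ} (hγ : 0 ≤ γ) (hs : 0 < s) (hR : 0 ≤ R) :
    ∫ x in Ioc 0 R, (x / s) ^ γ / ((x / s) ^ γ + 1) * x ≤ clippedPowerIntegral γ R s := by
  rw [← integral_min_one_rpow_div_mul_self hγ hs hR, intervalIntegral.integral_of_le hR]
  refine integral_mono_of_nonneg ?_ (Continuous.integrableOn_Ioc (by fun_prop (disch := exact hγ)))
    ?_ <;> filter_upwards [ae_restrict_mem measurableSet_Ioc] with x hx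
  · have := hx.1
    positivity
  · exact mul_le_mul_of_nonneg_right
      (div_add_one_le_min_one_self (rpow_nonneg (div_nonneg hx.1.le hs.le) γ)) hx.1.le

lemma setIntegral_mul_rpow_div_add_one_le {γ c r R k : ℝ} (hγ : 0 ≤ γ) (hc : 0 < c) (hr : 0 < r)
    (hR : 0 ≤ R) (hk : 0 ≤ k) :
    ∫ x in Ioc 0 R, (c ^ γ * x ^ γ / r ^ γ) / (c ^ γ * x ^ γ / r ^ γ + 1) * (k * x)
      ≤ k * clippedPowerIntegral γ R (c⁻¹ * r) := by
  have hq : ∀ x ∈ Ioc 0 R, c ^ γ * x ^ γ / r ^ γ = (x / (c⁻¹ * r)) ^ γ := fun x hx => by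
    rw [div_rpow hx.1.le (by positivity), mul_rpow (by positivity) hr.le, inv_rpow hc.le]
    field_simp
  rw [setIntegral_congr_fun measurableSet_Ioc (fun x hx => by rw [hq x hx, mul_left_comm]),
    integral_const_mul]
  exact mul_le_mul_of_nonneg_left (setIntegral_rpow_div_add_one_mul_le hγ (by positivity) hR) hk

section

variable {γ R : ℝ}

lemma integrableOn_Ioc_mul_clippedPowerIntegral :
    IntegrableOn (fun s => s * clippedPowerIntegral γ R s) (Ioc 0 R) := by
  refine IntegrableOn.congr_fun (f := fun s => s * (s ^ 2 / (γ + 2) + (R ^ 2 - s ^ 2) / 2))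
    (Continuous.integrableOn_Ioc (by fun_prop)) (fun s hs => ?_) measurableSet_Ioc
  simp only [clippedPowerIntegral, if_pos hs.2]

lemma setIntegral_Ioc_mul_clippedPowerIntegral (hR : 0 ≤ R) :
    ∫ s in Ioc 0 R, s * clippedPowerIntegral γ R s = R ^ 4 * (1 / 8 + 1 / (4 * (γ + 2))) := by
  rw [setIntegral_congr_fun (g := fun s => (1 / (γ + 2) - 1 / 2) * s ^ 3 + R ^ 2 / 2 * s)
    measurableSet_Ioc (fun s hs => by simp only [clippedPowerIntegral, if_pos hs.2]; ring),
    ← intervalIntegral.integral_of_le hR, intervalIntegral.integral_add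
      (Continuous.intervalIntegrable (by fun_prop) _ _)
      (Continuous.intervalIntegrable (by fun_prop) _ _),
    intervalIntegral.integral_const_mul, intervalIntegral.integral_const_mul, integral_pow,
    integral_id]
  simp only [one_div, mul_inv]
  ring

lemma mul_clippedPowerIntegral_of_lt {s : ℝ} (hR : 0 ≤ R) (hRs : R < s) :
    s * clippedPowerIntegral γ R s = R ^ (γ + 2) / (γ + 2) * s ^ (1 - γ) := by
  rw [clippedPowerIntegral, if_neg hRs.not_ge, rpow_sub (hR.trans_lt hRs), rpow_one]
  simp only [div_eq_mul_inv, mul_inv]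
  ring

lemma integrableOn_Ioi_mul_clippedPowerIntegral (hγ : 2 < γ) (hR : 0 < R) :
    IntegrableOn (fun s => s * clippedPowerIntegral γ R s) (Ioi R) :=
  IntegrableOn.congr_fun
    ((integrableOn_Ioi_rpow_of_lt (a := 1 - γ) (by linarith) hR).const_mul _)
    (fun _ hs => (mul_clippedPowerIntegral_of_lt hR.le hs).symm) measurableSet_Ioi

lemma setIntegral_Ioi_mul_clippedPowerIntegral (hγ : 2 < γ) (hR : 0 < R) :
    ∫ s in Ioi R, s * clippedPowerIntegral γ R s = R ^ 4 / ((γ + 2) * (γ - 2)) := by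
  rw [setIntegral_congr_fun measurableSet_Ioi (fun _ hs => mul_clippedPowerIntegral_of_lt hR.le hs),
    integral_const_mul, integral_Ioi_rpow_of_lt (by linarith) hR, ← rpow_natCast, Nat.cast_ofNat,
    show 1 - γ + 1 = 4 - (γ + 2) by ring, rpow_sub hR]
  have : 4 - (γ + 2) ≠ 0 := by linarith
  have : γ - 2 ≠ 0 := by linarith
  field_simp
  ring

lemma integrableOn_mul_clippedPowerIntegral (hγ : 2 < γ) (hR : 0 < R) :
    IntegrableOn (fun s => s * clippedPowerIntegral γ R s) (Ioi 0) :=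
  Ioc_union_Ioi_eq_Ioi hR.le ▸ integrableOn_Ioc_mul_clippedPowerIntegral.union
    (integrableOn_Ioi_mul_clippedPowerIntegral hγ hR)

lemma integral_mul_clippedPowerIntegral (hγ : 2 < γ) (hR : 0 < R) :
    ∫ s in Ioi 0, s * clippedPowerIntegral γ R s
      = R ^ 4 * (1 / 8 + 1 / (4 * (γ + 2)) + 1 / ((γ + 2) * (γ - 2))) := by
  rw [← Ioc_union_Ioi_eq_Ioi hR.le, setIntegral_union (Ioc_disjoint_Ioi le_rfl) measurableSet_Ioi
    integrableOn_Ioc_mul_clippedPowerIntegral (integrableOn_Ioi_mul_clippedPowerIntegral hγ hR),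
    setIntegral_Ioc_mul_clippedPowerIntegral hR.le, setIntegral_Ioi_mul_clippedPowerIntegral hγ hR]
  ring

end

theorem stmt_1 (γ T ρ R : ℝ) (hγ : 2 < γ) (hT : 0 < T) (hρ : 0 < ρ) (hR : 0 < R) :
    (∫ r₁ in Set.Ioi (0:ℝ), 2 * π * r₁ *
        ∫ r₂ in Set.Ioc (0:ℝ) R,
          (T * ρ * r₂ ^ γ / r₁ ^ γ) / (T * ρ * r₂ ^ γ / r₁ ^ γ + 1) * (2 * π * r₂))
      ≤ 4 * π ^ 2 * R ^ 4 * (T * ρ) ^ (2 / γ) *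
        (1/8 + 1/(4*(γ+2)) + 1/((γ+2)*(γ-2))) := by
  obtain ⟨c, hc, hca⟩ : ∃ c, 0 < c ∧ c ^ γ = T * ρ :=
    ⟨(T * ρ) ^ γ⁻¹, by positivity, rpow_inv_rpow (by positivity) (by linarith)⟩
  have hc2 : (c ^ γ) ^ (2 / γ) = c ^ 2 := by
    rw [← rpow_mul hc.le, mul_div_cancel₀ _ (by linarith), rpow_two]
  have hmajorant : IntegrableOn (fun r => c⁻¹ * r * clippedPowerIntegral γ R (c⁻¹ * r)) (Ioi 0) := by
    rw [integrableOn_Ioi_comp_mul_left_iff (fun s => s * clippedPowerIntegral γ R s) 0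
      (inv_pos.2 hc), mul_zero]
    exact integrableOn_mul_clippedPowerIntegral hγ hR
  rw [← hca, hc2]
  calc _ ≤ ∫ r in Ioi 0, 4 * π ^ 2 * c * (c⁻¹ * r * clippedPowerIntegral γ R (c⁻¹ * r)) := by
        refine integral_mono_of_nonneg ?_ (hmajorant.const_mul _) ?_ <;>
          filter_upwards [ae_restrict_mem measurableSet_Ioi] with r (hr : 0 < r)
        · refine mul_nonneg (by positivity) (setIntegral_nonneg measurableSet_Ioc fun x hx => ?_)
          have := hx.1
          positivity
        · calc _ ≤ 2 * π * r * (2 * π * clippedPowerIntegral γ R (c⁻¹ * r)) := by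
                gcongr
                exact setIntegral_mul_rpow_div_add_one_le (by linarith) hc hr hR.le (by positivity)
            _ = _ := by field_simp; ring
    _ = 4 * π ^ 2 * c ^ 2 * ∫ s in Ioi 0, s * clippedPowerIntegral γ R s := by
        rw [integral_const_mul, integral_comp_mul_left_Ioi (fun s => s * clippedPowerIntegral γ R s)
          0 (inv_pos.2 hc), mul_zero, inv_inv, smul_eq_mul]
        ring
    _ = _ := by
        rw [integral_mul_clippedPowerIntegral hγ hR]
        ring
end

section
/- For real numbers γ > 2, T > 0, ρ > 0, R > 0, the double integral V = ∫_0^∞ 2π r₁ ∫_0^R (Tρ r₂^γ / r₁^γ) / (Tρ r₂^γ / r₁^γ + 1) · 2π r₂ dr₂ dr₁ satisfies V ≥ 2π²R⁴(Tρ)^{2/γ} (1/8 + 1/(4(γ+2)) + 1/((γ+2)(γ−2))). -/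
/-!
Write `k = Tρ`. Since `x / (x + 1) ≥ min x 1 / 2`, the inner integral is at least
`π ∫₀ᴿ min (k r₂^γ / r₁^γ) 1 · r₂ dr₂`. The scaling `r₁ = k^{1/γ} c` reduces to `k = 1`, where this
truncated moment has a closed form whose integral against `2π c dc` over `(0, ∞)` is exactly the
stated bound. The matching upper bound `x / (x + 1) ≤ min x 1` makes the outer integrand
integrable, so its Bochner integral is not the junk value `0`.
-/

open Real MeasureTheory Set

lemma min_div_two_le_div_add_one {x : ℝ} (hx : 0 ≤ x) : min x 1 / 2 ≤ x / (x + 1) := by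
  rw [le_div_iff₀ (by linarith)]
  rcases le_total x 1 with h | h
  · rw [min_eq_left h]; nlinarith
  · rw [min_eq_right h]; linarith

lemma div_add_one_le_min {x : ℝ} (hx : 0 ≤ x) : x / (x + 1) ≤ min x 1 := by
  rw [div_le_iff₀ (by linarith)]
  rcases le_total x 1 with h | h
  · rw [min_eq_left h]; nlinarith
  · rw [min_eq_right h]; linarith

/-- The closed form of `∫ r in 0..R, min (r ^ γ / c ^ γ) 1 * r`. -/
noncomputable def truncatedMoment (γ R c : ℝ) : ℝ :=
  if c ≤ R then c ^ 2 / (γ + 2) + (R ^ 2 - c ^ 2) / 2 else R ^ (γ + 2) / ((γ + 2) * c ^ γ)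

lemma integral_rpow_div_mul_self_s2 {γ b : ℝ} (c : ℝ) (hγ : -1 < γ) (hb : 0 ≤ b) :
    ∫ r in (0 : ℝ)..b, r ^ γ / c ^ γ * r = b ^ (γ + 2) / ((γ + 2) * c ^ γ) := by
  have hpow : ∀ r ∈ uIcc (0 : ℝ) b, r ^ γ / c ^ γ * r = (c ^ γ)⁻¹ * r ^ (γ + 1) := by
    intro r hr
    rw [uIcc_of_le hb] at hr
    rw [rpow_add_one' hr.1 (by linarith)]
    ring
  rw [intervalIntegral.integral_congr hpow, intervalIntegral.integral_const_mul,
    integral_rpow (Or.inl (by linarith)), zero_rpow (by linarith)]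
  rw [show γ + 1 + 1 = γ + 2 by ring]
  field_simp
  ring

lemma integral_min_rpow_div_mul_self {γ R c : ℝ} (hγ : 0 ≤ γ) (hc : 0 < c) (hR : 0 ≤ R) :
    ∫ r in (0 : ℝ)..R, min (r ^ γ / c ^ γ) 1 * r = truncatedMoment γ R c := by
  have hcγ : 0 < c ^ γ := rpow_pos_of_pos hc γ
  have hcont : Continuous fun r : ℝ => min (r ^ γ / c ^ γ) 1 * r := by fun_prop
  have below : ∀ {b}, 0 ≤ b → b ≤ c →
      ∀ r ∈ uIcc 0 b, min (r ^ γ / c ^ γ) 1 * r = r ^ γ / c ^ γ * r := by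
    intro b hb hbc r hr
    rw [uIcc_of_le hb] at hr
    rw [min_eq_left ((div_le_one hcγ).2 (rpow_le_rpow hr.1 (hr.2.trans hbc) hγ))]
  unfold truncatedMoment
  split_ifs with hcR
  · have above : ∀ r ∈ uIcc c R, min (r ^ γ / c ^ γ) 1 * r = r := by
      intro r hr
      rw [uIcc_of_le hcR] at hr
      rw [min_eq_right ((one_le_div hcγ).2 (rpow_le_rpow hc.le hr.1 hγ)), one_mul]
    rw [← intervalIntegral.integral_add_adjacent_intervals (hcont.intervalIntegrable 0 c)
        (hcont.intervalIntegrable c R), intervalIntegral.integral_congr (below hc.le le_rfl),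
      intervalIntegral.integral_congr above, integral_rpow_div_mul_self_s2 c (by linarith) hc.le,
      integral_id, rpow_add hc, rpow_two]
    field_simp
  · rw [intervalIntegral.integral_congr (below hR (not_le.1 hcR).le),
      integral_rpow_div_mul_self_s2 c (by linarith) hR]

section truncatedMoment

variable {γ R : ℝ}

lemma eqOn_mul_truncatedMoment_Iic :
    EqOn (fun c => c * truncatedMoment γ R c)
      (fun c => (1 / (γ + 2) - 1 / 2) * c ^ 3 + R ^ 2 / 2 * c) (Iic R) := by
  intro c hc
  simp only [truncatedMoment, if_pos (show c ≤ R from hc)]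
  ring

lemma eqOn_mul_truncatedMoment_Ioi (hR : 0 ≤ R) :
    EqOn (fun c => c * truncatedMoment γ R c)
      (fun c => R ^ (γ + 2) / (γ + 2) * c ^ (1 - γ)) (Ioi R) := by
  intro c hc
  have hc0 : 0 < c := hR.trans_lt hc
  simp only [truncatedMoment, if_neg (not_le.2 (show R < c from hc)), rpow_sub hc0, rpow_one]
  field_simp

lemma integrableOn_mul_truncatedMoment (hγ : 2 < γ) (hR : 0 < R) :
    IntegrableOn (fun c => c * truncatedMoment γ R c) (Ioi 0) := by
  rw [← Ioc_union_Ioi_eq_Ioi hR.le]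
  refine IntegrableOn.union ?_ ?_
  · exact (Continuous.integrableOn_Ioc (by fun_prop)).congr_fun
      (eqOn_mul_truncatedMoment_Iic.mono Ioc_subset_Iic_self).symm measurableSet_Ioc
  · exact IntegrableOn.congr_fun
      ((integrableOn_Ioi_rpow_of_lt (by linarith : 1 - γ < -1) hR).const_mul _)
      (eqOn_mul_truncatedMoment_Ioi hR.le).symm measurableSet_Ioi

lemma integral_mul_truncatedMoment (hγ : 2 < γ) (hR : 0 < R) :
    ∫ c in Ioi 0, c * truncatedMoment γ R c =
      R ^ 4 * (1/8 + 1/(4*(γ+2)) + 1/((γ+2)*(γ-2))) := by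
  have hint := integrableOn_mul_truncatedMoment hγ hR
  rw [← Ioc_union_Ioi_eq_Ioi hR.le] at hint ⊢
  rw [setIntegral_union (Ioc_disjoint_Ioi le_rfl) measurableSet_Ioi
      (hint.mono_set subset_union_left) (hint.mono_set subset_union_right),
    setIntegral_congr_fun measurableSet_Ioc
      (eqOn_mul_truncatedMoment_Iic.mono Ioc_subset_Iic_self),
    setIntegral_congr_fun measurableSet_Ioi (eqOn_mul_truncatedMoment_Ioi hR.le),
    ← intervalIntegral.integral_of_le hR.le, integral_const_mul,
    integral_Ioi_rpow_of_lt (by linarith : 1 - γ < -1) hR]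
  have hR4 : R ^ (γ + 2) * R ^ (1 - γ + 1) = R ^ 4 := by
    rw [← rpow_add hR, show γ + 2 + (1 - γ + 1) = (4 : ℕ) by push_cast; ring, rpow_natCast]
  rw [intervalIntegral.integral_add (Continuous.intervalIntegrable (by fun_prop) _ _)
      (Continuous.intervalIntegrable (by fun_prop) _ _),
    intervalIntegral.integral_const_mul, intervalIntegral.integral_const_mul, integral_pow,
    integral_id, neg_div, mul_neg, div_mul_div_comm (R ^ (γ + 2)), hR4]
  have : γ - 2 ≠ 0 := by linarith
  have : 1 - γ + 1 ≠ 0 := by linarith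
  field_simp
  ring

end truncatedMoment

lemma integral_div_add_one_bounds {γ R c : ℝ} (hγ : 0 ≤ γ) (hc : 0 < c) (hR : 0 ≤ R) :
    π * truncatedMoment γ R c ≤
        ∫ r in (0:ℝ)..R, (r ^ γ / c ^ γ) / (r ^ γ / c ^ γ + 1) * (2 * π * r) ∧
      ∫ r in (0:ℝ)..R, (r ^ γ / c ^ γ) / (r ^ γ / c ^ γ + 1) * (2 * π * r) ≤
        2 * π * truncatedMoment γ R c := by
  have hx : ∀ r ∈ Icc 0 R, 0 ≤ r ^ γ / c ^ γ := fun r hr => by have := hr.1; positivity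
  have h2πr : ∀ r ∈ Icc 0 R, 0 ≤ 2 * π * r := fun r hr => by have := hr.1; positivity
  have hcont : ContinuousOn (fun r : ℝ =>
      (r ^ γ / c ^ γ) / (r ^ γ / c ^ γ + 1) * (2 * π * r)) (uIcc 0 R) := by
    refine ContinuousOn.mul (ContinuousOn.div (by fun_prop) (by fun_prop) fun r hr => ?_)
      (by fun_prop)
    rw [uIcc_of_le hR] at hr
    linarith [hx r hr]
  have hmin : IntervalIntegrable (fun r : ℝ => min (r ^ γ / c ^ γ) 1 * r) volume 0 R :=
    Continuous.intervalIntegrable (by fun_prop) _ _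
  rw [← integral_min_rpow_div_mul_self hγ hc hR, ← intervalIntegral.integral_const_mul,
    ← intervalIntegral.integral_const_mul]
  constructor
  · refine intervalIntegral.integral_mono_on hR (hmin.const_mul π) hcont.intervalIntegrable
      fun r hr => ?_
    calc π * (min (r ^ γ / c ^ γ) 1 * r) = min (r ^ γ / c ^ γ) 1 / 2 * (2 * π * r) := by ring
      _ ≤ _ := mul_le_mul_of_nonneg_right (min_div_two_le_div_add_one (hx r hr)) (h2πr r hr)
  · refine intervalIntegral.integral_mono_on hR hcont.intervalIntegrable (hmin.const_mul _)
      fun r hr => ?_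
    calc (r ^ γ / c ^ γ) / (r ^ γ / c ^ γ + 1) * (2 * π * r)
        ≤ min (r ^ γ / c ^ γ) 1 * (2 * π * r) :=
          mul_le_mul_of_nonneg_right (div_add_one_le_min (hx r hr)) (h2πr r hr)
      _ = _ := by ring

noncomputable def outerIntegrand (k γ R r₁ : ℝ) : ℝ :=
  2 * π * r₁ * ∫ r₂ in Ioc (0:ℝ) R,
    (k * r₂ ^ γ / r₁ ^ γ) / (k * r₂ ^ γ / r₁ ^ γ + 1) * (2 * π * r₂)

section outerIntegrand

variable {k γ R : ℝ}

lemma measurable_outerIntegrand : Measurable (outerIntegrand k γ R) := by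
  have hinner : StronglyMeasurable fun p : ℝ × ℝ =>
      (k * p.2 ^ γ / p.1 ^ γ) / (k * p.2 ^ γ / p.1 ^ γ + 1) * (2 * π * p.2) :=
    (by fun_prop : Measurable _).stronglyMeasurable
  exact (measurable_const.mul measurable_id).mul
    (hinner.integral_prod_right' (ν := volume.restrict (Ioc 0 R))).measurable

lemma outerIntegrand_mul {a c : ℝ} (ha : 0 < a) (hc : 0 ≤ c) :
    outerIntegrand (a ^ γ) γ R (a * c) = a * outerIntegrand 1 γ R c := by
  have hscale : ∀ r₂ : ℝ, a ^ γ * r₂ ^ γ / (a * c) ^ γ = 1 * r₂ ^ γ / c ^ γ := fun r₂ => by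
    rw [mul_rpow ha.le hc, mul_div_mul_left _ _ (rpow_pos_of_pos ha γ).ne', one_mul]
  simp only [outerIntegrand, hscale]
  ring

lemma outerIntegrand_one_bounds (hγ : 0 ≤ γ) {c : ℝ} (hc : 0 < c) (hR : 0 ≤ R) :
    2 * π ^ 2 * (c * truncatedMoment γ R c) ≤ outerIntegrand 1 γ R c ∧
      outerIntegrand 1 γ R c ≤ 4 * π ^ 2 * (c * truncatedMoment γ R c) := by
  obtain ⟨lower, upper⟩ := integral_div_add_one_bounds hγ hc hR
  have h2πc : 0 ≤ 2 * π * c := by positivity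
  simp only [outerIntegrand, one_mul]
  rw [← intervalIntegral.integral_of_le hR]
  constructor
  · calc _ = 2 * π * c * (π * truncatedMoment γ R c) := by ring
      _ ≤ _ := mul_le_mul_of_nonneg_left lower h2πc
  · calc _ ≤ 2 * π * c * (2 * π * truncatedMoment γ R c) :=
          mul_le_mul_of_nonneg_left upper h2πc
      _ = _ := by ring

lemma integrableOn_outerIntegrand_one (hγ : 2 < γ) (hR : 0 < R) :
    IntegrableOn (outerIntegrand 1 γ R) (Ioi 0) := by
  refine Integrable.mono' ((integrableOn_mul_truncatedMoment hγ hR).const_mul (4 * π ^ 2))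
    measurable_outerIntegrand.aestronglyMeasurable ?_
  rw [ae_restrict_iff' measurableSet_Ioi]
  refine .of_forall fun c (hc : 0 < c) => ?_
  obtain ⟨lower, upper⟩ := outerIntegrand_one_bounds (by linarith : (0 : ℝ) ≤ γ) hc hR.le
  rw [Real.norm_of_nonneg (by linarith)]
  exact upper

lemma le_integral_outerIntegrand_one (hγ : 2 < γ) (hR : 0 < R) :
    2 * π ^ 2 * R ^ 4 * (1/8 + 1/(4*(γ+2)) + 1/((γ+2)*(γ-2))) ≤
      ∫ c in Ioi 0, outerIntegrand 1 γ R c := by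
  rw [mul_assoc, ← integral_mul_truncatedMoment hγ hR, ← integral_const_mul]
  exact setIntegral_mono_on ((integrableOn_mul_truncatedMoment hγ hR).const_mul _)
    (integrableOn_outerIntegrand_one hγ hR) measurableSet_Ioi
    fun c hc => (outerIntegrand_one_bounds (by linarith : (0 : ℝ) ≤ γ) hc hR.le).1

end outerIntegrand

theorem stmt_2 (γ T ρ R : ℝ) (hγ : 2 < γ) (hT : 0 < T) (hρ : 0 < ρ) (hR : 0 < R) :
    2 * π ^ 2 * R ^ 4 * (T * ρ) ^ (2 / γ) *
        (1/8 + 1/(4*(γ+2)) + 1/((γ+2)*(γ-2)))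
      ≤ ∫ r₁ in Set.Ioi (0:ℝ), 2 * π * r₁ *
          ∫ r₂ in Set.Ioc (0:ℝ) R,
            (T * ρ * r₂ ^ γ / r₁ ^ γ) / (T * ρ * r₂ ^ γ / r₁ ^ γ + 1) * (2 * π * r₂) := by
  have hk : 0 < T * ρ := mul_pos hT hρ
  set a := (T * ρ) ^ (1 / γ)
  have ha : 0 < a := rpow_pos_of_pos hk _
  have haγ : a ^ γ = T * ρ := by
    rw [← rpow_mul hk.le, one_div_mul_cancel (by linarith), rpow_one]
  have ha2 : (T * ρ) ^ (2 / γ) = a ^ 2 := by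
    rw [← rpow_natCast, ← rpow_mul hk.le]
    norm_num [div_eq_mul_one_div 2 γ, mul_comm]
  have hscale : ∫ r₁ in Ioi 0, outerIntegrand (T * ρ) γ R r₁ =
      a ^ 2 * ∫ c in Ioi 0, outerIntegrand 1 γ R c := by
    have hsubst := integral_comp_mul_left_Ioi' (outerIntegrand (T * ρ) γ R) 0 ha
    rw [mul_zero] at hsubst
    rw [← hsubst, ← haγ,
      setIntegral_congr_fun measurableSet_Ioi fun c hc => outerIntegrand_mul ha (le_of_lt hc),
      integral_const_mul, smul_eq_mul]
    ring
  change _ ≤ ∫ r₁ in Ioi 0, outerIntegrand (T * ρ) γ R r₁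
  rw [hscale, ha2]
  calc _ = a ^ 2 * (2 * π ^ 2 * R ^ 4 * (1/8 + 1/(4*(γ+2)) + 1/((γ+2)*(γ-2)))) := by ring
    _ ≤ _ := by gcongr; exact le_integral_outerIntegrand_one hγ hR
end
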